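/- (Uniqueness of the Baxter polynomial in the case k1 = 0, from the proof of Theorem 5.1.) Assume η ≠ 0, k2 ≠ 0 and the genericity condition. Fix indices h = (h_1,…,h_N) with h_n ∈ {0,…,d_n} and set t_h(X) := k2·∏_{n=1}^N (X − ζ_{n,h_n}) and Q_h(X) := ∏_{n=1}^N ∏_{k=0}^{h_n−1} (X − ζ_{n,k}). Then every polynomial Q ∈ ℂ[X] satisfying t_h(X)·Q(X) = k2·d(X)·Q(X+η) is a scalar multiple of Q_h. -/

import Mathlib

/-!
`Q_h` solves the difference equation itself: shifting `∏_{k<h_n} (X − ζ_{n,k})` by `η` turns it into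
`∏_{1≤k≤h_n} (X − ζ_{n,k})`, so both sides of the equation for `Q_h` equal `k2 ∏_n ∏_{k≤h_n} (X − ζ_{n,k})`.
Two solutions `P ≠ 0`, `Q` of `t·Y = D·Y(X+η)` with `D ≠ 0` satisfy `Q·P(X+η) = Q(X+η)·P`, i.e. `Q/P` is an
`η`-periodic rational function. Writing `Q/P = A/B` in lowest terms, `B` divides its own shift, which has
the same degree and leading coefficient, so `B` is `η`-periodic; likewise `A`. A periodic polynomial takes
the same value at the infinitely many points `nη`, hence is constant.
-/

open Polynomial Finset

noncomputable section

/-- The shifted inhomogeneity points `ζ_{n,k} = ξ_n + (d_n − 1)η/2 − k·η`. -/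
def zeta {N : ℕ} (d : Fin N → ℕ) (ξ : Fin N → ℂ) (η : ℂ) (n : Fin N) (k : ℕ) : ℂ :=
  ξ n + ((d n : ℂ) - 1) * η / 2 - (k : ℂ) * η

/-- `d(X) = ∏ₙ (X − ζ_{n,0})`. -/
def dpol {N : ℕ} (d : Fin N → ℕ) (ξ : Fin N → ℂ) (η : ℂ) : Polynomial ℂ :=
  ∏ n : Fin N, (X - C (zeta d ξ η n 0))

theorem Polynomial.taylor_prod {R ι : Type*} [CommSemiring R] (r : R) (s : Finset ι)
    (f : ι → R[X]) : taylor r (∏ i ∈ s, f i) = ∏ i ∈ s, taylor r (f i) :=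
  map_prod (taylorAlgHom r) f s

section CommRing

variable {R : Type*} [CommRing R]

theorem X_sub_C_mul_prod_range_eq_mul_taylor (r : R) (z : ℕ → R)
    (hz : ∀ k, z (k + 1) = z k - r) (h : ℕ) :
    (X - C (z h)) * ∏ k ∈ range h, (X - C (z k))
      = (X - C (z 0)) * taylor r (∏ k ∈ range h, (X - C (z k))) := by
  have hshift : ∀ k, taylor r (X - C (z k)) = X - C (z (k + 1)) := by
    intro k
    rw [map_sub, taylor_X, taylor_C, hz, map_sub]
    ring
  rw [taylor_prod, mul_comm, ← prod_range_succ, prod_range_succ', mul_comm]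
  simp only [hshift]

variable [IsDomain R]

theorem taylor_eq_self_of_dvd {r : R} {p : R[X]} (hp : p ≠ 0) (hdvd : p ∣ taylor r p) :
    taylor r p = p := by
  obtain ⟨s, hs⟩ := hdvd
  have hs0 : s ≠ 0 := by
    rintro rfl
    rw [mul_zero, taylor_eq_zero] at hs
    exact hp hs
  have hdeg : s.natDegree = 0 := by
    have := congrArg natDegree hs
    rw [natDegree_taylor, natDegree_mul hp hs0] at this
    omega
  have hlc : s.coeff 0 = 1 := by
    have := congrArg leadingCoeff hs
    have hlcs : s.leadingCoeff = s.coeff 0 := by rw [leadingCoeff, hdeg]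
    rw [leadingCoeff_taylor, leadingCoeff_mul, hlcs] at this
    exact (mul_eq_left₀ (leadingCoeff_ne_zero.mpr hp)).mp this.symm
  rw [hs, eq_C_of_natDegree_eq_zero hdeg, hlc, C_1, mul_one]

theorem eq_C_of_taylor_eq_self [CharZero R] {r : R} (hr : r ≠ 0) {p : R[X]}
    (hp : taylor r p = p) : p = C (p.eval 0) := by
  have heval : ∀ n : ℕ, p.eval (n * r) = p.eval 0 := by
    intro n
    induction n with
    | zero => simp
    | succ n ih => rw [Nat.cast_succ, add_one_mul, ← taylor_eval, hp, ih]
  apply eq_of_infinite_eval_eq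
  refine Set.infinite_of_injective_forall_mem (f := fun n : ℕ => (n : R) * r) ?_ ?_
  · intro a b hab
    exact_mod_cast mul_right_cancel₀ hr hab
  · intro n
    simp [heval]

end CommRing

section Field

variable {K : Type*} [Field K] [CharZero K] {r : K}

theorem exists_eq_C_mul_of_mul_taylor_eq (hr : r ≠ 0) {P Q : K[X]} (hP : P ≠ 0)
    (h : Q * taylor r P = taylor r Q * P) : ∃ c : K, Q = C c * P := by
  classical
  set g := GCDMonoid.gcd Q P
  have hg : g ≠ 0 := gcd_ne_zero_of_right hP
  set A := Q / g
  set B := P / g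
  have hQA : g * A = Q := EuclideanDomain.mul_div_cancel' hg (gcd_dvd_left Q P)
  have hPB : g * B = P := EuclideanDomain.mul_div_cancel' hg (gcd_dvd_right Q P)
  have hB0 : B ≠ 0 := right_ne_zero_of_mul (hPB ▸ hP)
  have hAB : A * taylor r B = taylor r A * B := by
    refine mul_left_cancel₀ (mul_ne_zero hg ((taylor_eq_zero r g).not.mpr hg)) ?_
    rw [← hQA, ← hPB, taylor_mul, taylor_mul] at h
    linear_combination h
  have hB : taylor r B = B := taylor_eq_self_of_dvd hB0 <|
    (isCoprime_div_gcd_div_gcd hP).symm.dvd_of_dvd_mul_left (hAB ▸ dvd_mul_left B _)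
  have hA : taylor r A = A := by
    rw [hB] at hAB
    exact (mul_right_cancel₀ hB0 hAB).symm
  obtain ⟨a, ha⟩ : ∃ a, A = C a := ⟨_, eq_C_of_taylor_eq_self hr hA⟩
  obtain ⟨b, hb⟩ : ∃ b, B = C b := ⟨_, eq_C_of_taylor_eq_self hr hB⟩
  have hb0 : b ≠ 0 := by
    rintro rfl
    exact hB0 (by rw [hb, C_0])
  refine ⟨a / b, ?_⟩
  rw [← hQA, ← hPB, ha, hb, mul_left_comm, ← C_mul, div_mul_cancel₀ _ hb0]

theorem exists_eq_C_mul_of_mul_eq_mul_taylor (hr : r ≠ 0) {t D P Q : K[X]} (hD : D ≠ 0)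
    (hP : P ≠ 0) (hPeq : t * P = D * taylor r P) (hQeq : t * Q = D * taylor r Q) :
    ∃ c : K, Q = C c * P :=
  exists_eq_C_mul_of_mul_taylor_eq hr hP <| mul_left_cancel₀ hD <| by
    linear_combination P * hQeq - Q * hPeq

end Field

theorem zeta_succ {N : ℕ} (d : Fin N → ℕ) (ξ : Fin N → ℂ) (η : ℂ) (n : Fin N) (k : ℕ) :
    zeta d ξ η n (k + 1) = zeta d ξ η n k - η := by
  simp only [zeta]
  push_cast
  ring

theorem statement8_general {N : ℕ} (d : Fin N → ℕ)
    (ξ : Fin N → ℂ) (η k2 : ℂ) (hη : η ≠ 0) (hk2 : k2 ≠ 0)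
    (h : Fin N → ℕ)
    (Q : Polynomial ℂ)
    (hQ : (C k2 * ∏ n : Fin N, (X - C (zeta d ξ η n (h n)))) * Q
      = C k2 * dpol d ξ η * Q.comp (X + C η)) :
    ∃ c : ℂ, Q = C c * ∏ n : Fin N, ∏ k ∈ Finset.range (h n), (X - C (zeta d ξ η n k)) := by
  refine exists_eq_C_mul_of_mul_eq_mul_taylor hη (t := ∏ n, (X - C (zeta d ξ η n (h n))))
    (D := dpol d ξ η)
    (prod_ne_zero_iff.mpr fun n _ => X_sub_C_ne_zero _)
    (prod_ne_zero_iff.mpr fun n _ => prod_ne_zero_iff.mpr fun k _ => X_sub_C_ne_zero _) ?_ ?_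
  · rw [dpol, ← prod_mul_distrib, taylor_prod, ← prod_mul_distrib]
    exact prod_congr rfl fun n _ => X_sub_C_mul_prod_range_eq_mul_taylor η _ (zeta_succ d ξ η n) (h n)
  · rw [taylor_apply]
    exact mul_left_cancel₀ (C_ne_zero.mpr hk2) (by simpa only [mul_assoc] using hQ)

/-- Uniqueness (up to scalar) of the Baxter polynomial in the case `k1 = 0`:
every polynomial solution `Q` of `t_h·Q = k2·d·Q(X+η)` is a scalar multiple of
`Q_h = ∏ₙ ∏_{k<hₙ} (X − ζ_{n,k})`. -/
theorem statement8 {N : ℕ} (hN : 1 ≤ N) (d : Fin N → ℕ) (hd : ∀ n, 1 ≤ d n)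
    (ξ : Fin N → ℂ) (η k2 : ℂ) (hη : η ≠ 0) (hk2 : k2 ≠ 0)
    (hgen : ∀ n m : Fin N, ∀ k j : ℕ, k ≤ d n → j ≤ d m →
      zeta d ξ η n k = zeta d ξ η m j → n = m ∧ k = j)
    (h : Fin N → ℕ) (hh : ∀ n, h n ≤ d n)
    (Q : Polynomial ℂ)
    (hQ : (C k2 * ∏ n : Fin N, (X - C (zeta d ξ η n (h n)))) * Q
      = C k2 * dpol d ξ η * Q.comp (X + C η)) :
    ∃ c : ℂ, Q = C c * ∏ n : Fin N, ∏ k ∈ Finset.range (h n), (X - C (zeta d ξ η n k)) :=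
  statement8_general d ξ η k2 hη hk2 h Q hQ
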